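/- Let (M,M') be a matroid perspective on a finite ground set E. Then, as an identity of polynomials in x, y, z (equivalently for all elements x,y,z of any commutative ring): 𝔗_{M,M'}(x,y,z) = Σ_{A⊆E} 𝔗_{M|A, M'|A}(0, y, −1) · 𝔗_{M/A, M'/A}(x, 0, z). -/
import Mathlib


open Finset

/-- A finite "pre-matroid": a finite ground set together with a rank function. -/
structure PreMatroid (α : Type*) where
  E : Finset α
  rk : Finset α → ℕ

namespace PreMatroid

variable {α : Type*} [DecidableEq α] {R : Type*} [CommRing R]

/-- The matroid axioms: `rk X ≤ |X|`, monotonicity, and submodularity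
(all on subsets of the ground set). -/
def IsMatroid (M : PreMatroid α) : Prop :=
  (∀ X, X ⊆ M.E → M.rk X ≤ X.card) ∧
  (∀ X Y, X ⊆ Y → Y ⊆ M.E → M.rk X ≤ M.rk Y) ∧
  (∀ X Y, X ⊆ M.E → Y ⊆ M.E → M.rk (X ∪ Y) + M.rk (X ∩ Y) ≤ M.rk X + M.rk Y)

/-- The restriction `M|A`: ground set `A`, rank function the restriction of `rk`. -/
def restrict (M : PreMatroid α) (A : Finset α) : PreMatroid α :=
  ⟨A, M.rk⟩

/-- The contraction `M/A`: ground set `E ∖ A`, rank function `B ↦ rk (B ∪ A) − rk A`. -/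
def contract (M : PreMatroid α) (A : Finset α) : PreMatroid α :=
  ⟨M.E \ A, fun B => M.rk (B ∪ A) - M.rk A⟩

/-- The deletion `M∖A ≔ M|(E∖A)`. -/
def delete (M : PreMatroid α) (A : Finset α) : PreMatroid α :=
  M.restrict (M.E \ A)

/-- The rank `rk(M) = rk(E(M))` of a matroid. -/
def rank (M : PreMatroid α) : ℕ := M.rk M.E

/-- The Tutte polynomial `𝔗_M(x,y) = Σ_{A ⊆ E} (x−1)^{rk(M)−rk(A)} (y−1)^{|A|−rk(A)}`,
evaluated at elements of a commutative ring. -/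
def tutte (M : PreMatroid α) (x y : R) : R :=
  ∑ A ∈ M.E.powerset, (x - 1) ^ (M.rank - M.rk A) * (y - 1) ^ (A.card - M.rk A)

end PreMatroid

namespace PreMatroid

/-- `(M, M')` is a matroid perspective: `M` and `M'` are matroids on the same ground
set and `rk_M(B) − rk_M(A) ≥ rk_{M'}(B) − rk_{M'}(A)` for all `A ⊆ B ⊆ E`. -/
def IsPerspective {α : Type*} [DecidableEq α] (M M' : PreMatroid α) : Prop :=
  M.IsMatroid ∧ M'.IsMatroid ∧ M'.E = M.E ∧
    ∀ A B : Finset α, A ⊆ B → B ⊆ M.E →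
      ((M'.rk B : ℤ) - M'.rk A) ≤ (M.rk B : ℤ) - M.rk A

/-- The Las Vergnas polynomial of a matroid perspective `(M, M')`:
`𝔗_{M,M'}(x,y,z) = Σ_{A⊆E} (x−1)^{rk M' − rk_{M'} A} (y−1)^{|A|−rk_M A}
z^{(rk M − rk_M A)−(rk M' − rk_{M'} A)}`. -/
def lasVergnas {α : Type*} (M M' : PreMatroid α) {R : Type*} [CommRing R]
    (x y z : R) : R :=
  ∑ A ∈ M.E.powerset,
    (x - 1) ^ (M'.rank - M'.rk A) * (y - 1) ^ (A.card - M.rk A) *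
      z ^ ((M.rank - M.rk A) - (M'.rank - M'.rk A))

private lemma neg_one_pow_congr {R : Type*} [CommRing R] {m n : ℕ} (h : m % 2 = n % 2) :
    ((-1 : R)) ^ m = (-1) ^ n := by
  rw [← Nat.div_add_mod m 2, ← Nat.div_add_mod n 2, pow_add, pow_add, pow_mul, pow_mul,
    neg_one_sq, one_pow, one_pow, h]

private lemma sum_powerset_neg_one_pow' {α R : Type*} [DecidableEq α] [CommRing R]
    (T : Finset α) :
    ∑ D ∈ T.powerset, ((-1 : R)) ^ D.card = if T = ∅ then 1 else 0 := by
  have h : ((∑ m ∈ T.powerset, (-1 : ℤ) ^ m.card : ℤ) : R)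
      = ∑ D ∈ T.powerset, ((-1 : R)) ^ D.card := by push_cast; rfl
  rw [← h, Finset.sum_powerset_neg_one_pow_card]
  split <;> simp

private lemma sum_Icc_neg_one_pow {α R : Type*} [DecidableEq α] [CommRing R]
    {B S : Finset α} (hBS : B ⊆ S) :
    ∑ A ∈ Finset.Icc B S, ((-1 : R)) ^ A.card
      = if B = S then ((-1 : R)) ^ S.card else 0 := by
  have h1 : ∑ A ∈ Finset.Icc B S, ((-1 : R)) ^ A.card
      = ∑ D ∈ (S \ B).powerset, ((-1 : R)) ^ (B ∪ D).card := by
    refine Finset.sum_nbij' (fun A => A \ B) (fun D => B ∪ D) ?_ ?_ ?_ ?_ ?_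
    · intro A hA
      rw [Finset.mem_Icc] at hA
      exact Finset.mem_powerset.2 (Finset.sdiff_subset_sdiff hA.2 Finset.Subset.rfl)
    · intro D hD
      rw [Finset.mem_powerset] at hD
      rw [Finset.mem_Icc]
      exact ⟨Finset.subset_union_left, Finset.union_subset hBS (hD.trans Finset.sdiff_subset)⟩
    · intro A hA
      rw [Finset.mem_Icc] at hA
      exact Finset.union_sdiff_of_subset hA.1
    · intro D hD
      rw [Finset.mem_powerset] at hD
      exact Finset.union_sdiff_cancel_left
        ((Finset.sdiff_disjoint.mono_left hD).symm)
    · intro A hA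
      rw [Finset.mem_Icc] at hA
      rw [Finset.union_sdiff_of_subset hA.1]
  have h2 : ∀ D ∈ (S \ B).powerset, ((-1 : R)) ^ (B ∪ D).card
      = (-1) ^ B.card * (-1) ^ D.card := by
    intro D hD
    rw [Finset.mem_powerset] at hD
    have hdisj : Disjoint B D := (Finset.sdiff_disjoint.mono_left hD).symm
    rw [Finset.card_union_of_disjoint hdisj, pow_add]
  rw [h1, Finset.sum_congr rfl h2, ← Finset.mul_sum, sum_powerset_neg_one_pow']
  by_cases hBSeq : B = S
  · subst hBSeq
    simp
  · have hne : S \ B ≠ ∅ := by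
      rw [Ne, Finset.sdiff_eq_empty_iff_subset]
      intro hsub
      exact hBSeq (Finset.Subset.antisymm hBS hsub)
    simp [hne, hBSeq]

/-- The three-variable convolution formula
`𝔗_{M,M'}(x,y,z) = Σ_{A⊆E} 𝔗_{M|A,M'|A}(0,y,−1) 𝔗_{M/A,M'/A}(x,0,z)`,
valid for all `x, y, z` in any commutative ring. -/
theorem lasVergnas_convolution_KRS {α : Type*} [DecidableEq α]
    (M M' : PreMatroid α) (h : IsPerspective M M')
    (R : Type*) [CommRing R] (x y z : R) :
    lasVergnas M M' x y z =
      ∑ A ∈ M.E.powerset,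
        lasVergnas (M.restrict A) (M'.restrict A) 0 y (-1) *
          lasVergnas (M.contract A) (M'.contract A) x 0 z := by
  classical
  obtain ⟨⟨hcard, hmono, hsub⟩, ⟨hcard', hmono'0, hsub'⟩, hE, hP⟩ := h
  have hmono' : ∀ X Y : Finset α, X ⊆ Y → Y ⊆ M.E → M'.rk X ≤ M'.rk Y :=
    fun X Y h1 h2 => hmono'0 X Y h1 (by rw [hE]; exact h2)
  have hPn : ∀ A B : Finset α, A ⊆ B → B ⊆ M.E →
      M'.rk B + M.rk A ≤ M.rk B + M'.rk A := by
    intro A B h1 h2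
    have := hP A B h1 h2
    omega
  have hsub3 : ∀ A C : Finset α, A ⊆ M.E → C ⊆ M.E \ A →
      M.rk (C ∪ A) ≤ C.card + M.rk A := by
    intro A C hA hC
    have h1 := hsub C A (hC.trans Finset.sdiff_subset) hA
    have h2 := hcard C (hC.trans Finset.sdiff_subset)
    omega
  -- the two building blocks
  set F : Finset α → R := fun B => (-1) ^ (M.rk B) * (y - 1) ^ (B.card - M.rk B) with hF
  set G : Finset α → R := fun S =>
    (x - 1) ^ (M'.rk M.E - M'.rk S) *
      ((-1) ^ (M.rk S) * z ^ ((M.rk M.E - M.rk S) - (M'.rk M.E - M'.rk S))) with hG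
  -- evaluation of the restricted Las Vergnas polynomial
  have key1 : ∀ A ∈ M.E.powerset,
      lasVergnas (M.restrict A) (M'.restrict A) (0 : R) y (-1)
        = (-1) ^ (M.rk A) * ∑ B ∈ A.powerset, F B := by
    intro A hA
    rw [Finset.mem_powerset] at hA
    rw [show lasVergnas (M.restrict A) (M'.restrict A) (0 : R) y (-1)
        = ∑ B ∈ A.powerset,
            (0 - 1 : R) ^ (M'.rk A - M'.rk B) * (y - 1) ^ (B.card - M.rk B) *
              (-1) ^ ((M.rk A - M.rk B) - (M'.rk A - M'.rk B)) from rfl]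
    rw [Finset.mul_sum]
    refine Finset.sum_congr rfl fun B hB => ?_
    rw [Finset.mem_powerset] at hB
    have h1 : M.rk B ≤ M.rk A := hmono B A hB hA
    have h1' : M'.rk B ≤ M'.rk A := hmono' B A hB hA
    have h2 := hPn B A hB hA
    simp only [hF]
    have hsgn : ((-1 : R)) ^ ((M'.rk A - M'.rk B) + ((M.rk A - M.rk B) - (M'.rk A - M'.rk B)))
        = (-1) ^ (M.rk A + M.rk B) := neg_one_pow_congr (by omega)
    linear_combination ((y - 1) ^ (B.card - M.rk B)) * hsgn
  -- evaluation of the contracted Las Vergnas polynomial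
  have key2 : ∀ A ∈ M.E.powerset,
      lasVergnas (M.contract A) (M'.contract A) x (0 : R) z
        = (-1) ^ (M.rk A) * ∑ C ∈ (M.E \ A).powerset, (-1) ^ C.card * G (C ∪ A) := by
    intro A hA
    rw [Finset.mem_powerset] at hA
    have hU : (M.E \ A) ∪ A = M.E := Finset.sdiff_union_of_subset hA
    have hU' : (M'.E \ A) ∪ A = M.E := by rw [hE]; exact hU
    rw [show lasVergnas (M.contract A) (M'.contract A) x (0 : R) z
        = ∑ C ∈ (M.E \ A).powerset,
            (x - 1) ^ ((M'.rk ((M'.E \ A) ∪ A) - M'.rk A) - (M'.rk (C ∪ A) - M'.rk A)) *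
              (0 - 1 : R) ^ (C.card - (M.rk (C ∪ A) - M.rk A)) *
              z ^ (((M.rk ((M.E \ A) ∪ A) - M.rk A) - (M.rk (C ∪ A) - M.rk A))
                - ((M'.rk ((M'.E \ A) ∪ A) - M'.rk A) - (M'.rk (C ∪ A) - M'.rk A))) from rfl]
    rw [Finset.mul_sum]
    refine Finset.sum_congr rfl fun C hC => ?_
    rw [Finset.mem_powerset] at hC
    rw [show M'.rk ((M'.E \ A) ∪ A) = M'.rk M.E from by rw [hU'],
       show M.rk ((M.E \ A) ∪ A) = M.rk M.E from by rw [hU]]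
    have hCE : C ∪ A ⊆ M.E := Finset.union_subset (hC.trans Finset.sdiff_subset) hA
    have hAC : A ⊆ C ∪ A := Finset.subset_union_right
    have h1 : M.rk A ≤ M.rk (C ∪ A) := hmono _ _ hAC hCE
    have h1' : M'.rk A ≤ M'.rk (C ∪ A) := hmono' _ _ hAC hCE
    have h2 : M.rk (C ∪ A) ≤ M.rk M.E := hmono _ _ hCE Finset.Subset.rfl
    have h2' : M'.rk (C ∪ A) ≤ M'.rk M.E := hmono' _ _ hCE Finset.Subset.rfl
    have h3 := hPn (C ∪ A) M.E hCE Finset.Subset.rfl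
    have h4 := hsub3 A C hA hC
    have e1 : (M'.rk M.E - M'.rk A) - (M'.rk (C ∪ A) - M'.rk A)
        = M'.rk M.E - M'.rk (C ∪ A) := by omega
    have e3 : ((M.rk M.E - M.rk A) - (M.rk (C ∪ A) - M.rk A))
          - ((M'.rk M.E - M'.rk A) - (M'.rk (C ∪ A) - M'.rk A))
        = (M.rk M.E - M.rk (C ∪ A)) - (M'.rk M.E - M'.rk (C ∪ A)) := by omega
    rw [e3, e1]
    simp only [hG]
    have hsgn : ((-1 : R)) ^ (C.card - (M.rk (C ∪ A) - M.rk A))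
        = (-1) ^ (M.rk A + (C.card + M.rk (C ∪ A))) := neg_one_pow_congr (by omega)
    linear_combination ((x - 1) ^ (M'.rk M.E - M'.rk (C ∪ A)) *
      z ^ ((M.rk M.E - M.rk (C ∪ A)) - (M'.rk M.E - M'.rk (C ∪ A)))) * hsgn
  symm
  calc
    ∑ A ∈ M.E.powerset,
        lasVergnas (M.restrict A) (M'.restrict A) (0 : R) y (-1) *
          lasVergnas (M.contract A) (M'.contract A) x (0 : R) z
      = ∑ A ∈ M.E.powerset, (∑ B ∈ A.powerset, F B) *
          (∑ C ∈ (M.E \ A).powerset, (-1) ^ C.card * G (C ∪ A)) := by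
        refine Finset.sum_congr rfl fun A hA => ?_
        rw [key1 A hA, key2 A hA]
        have hsgn : ((-1 : R)) ^ (M.rk A) * (-1) ^ (M.rk A) = 1 := by
          rw [← pow_add]
          rw [show ((-1 : R)) ^ (M.rk A + M.rk A) = (-1) ^ 0 from
            neg_one_pow_congr (by omega), pow_zero]
        linear_combination ((∑ B ∈ A.powerset, F B) *
          (∑ C ∈ (M.E \ A).powerset, (-1 : R) ^ C.card * G (C ∪ A))) * hsgn
    _ = ∑ A ∈ M.E.powerset, (∑ B ∈ A.powerset, F B) *
          (∑ S ∈ Finset.Icc A M.E, (-1) ^ S.card * ((-1) ^ A.card * G S)) := by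
        refine Finset.sum_congr rfl fun A hA => ?_
        rw [Finset.mem_powerset] at hA
        congr 1
        refine Finset.sum_nbij' (fun C => C ∪ A) (fun S => S \ A) ?_ ?_ ?_ ?_ ?_
        · intro C hC
          rw [Finset.mem_powerset] at hC
          rw [Finset.mem_Icc]
          exact ⟨Finset.subset_union_right,
            Finset.union_subset (hC.trans Finset.sdiff_subset) hA⟩
        · intro S hS
          rw [Finset.mem_Icc] at hS
          rw [Finset.mem_powerset]
          exact Finset.sdiff_subset_sdiff hS.2 Finset.Subset.rfl
        · intro C hC
          rw [Finset.mem_powerset] at hC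
          exact Finset.union_sdiff_cancel_right (Finset.sdiff_disjoint.mono_left hC)
        · intro S hS
          rw [Finset.mem_Icc] at hS
          exact Finset.sdiff_union_of_subset hS.1
        · intro C hC
          rw [Finset.mem_powerset] at hC
          have hdisj : Disjoint C A := Finset.sdiff_disjoint.mono_left hC
          have hcardu : (C ∪ A).card = C.card + A.card :=
            Finset.card_union_of_disjoint hdisj
          have hsgn : ((-1 : R)) ^ C.card = (-1) ^ ((C ∪ A).card + A.card) := by
            rw [hcardu]
            exact neg_one_pow_congr (by omega)
          linear_combination (G (C ∪ A)) * hsgn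
    _ = ∑ A ∈ M.E.powerset, ∑ S ∈ Finset.Icc A M.E,
          (∑ B ∈ A.powerset, F B) * ((-1) ^ S.card * ((-1) ^ A.card * G S)) := by
        exact Finset.sum_congr rfl fun A _ => Finset.mul_sum _ _ _
    _ = ∑ S ∈ M.E.powerset, ∑ A ∈ S.powerset,
          (∑ B ∈ A.powerset, F B) * ((-1) ^ S.card * ((-1) ^ A.card * G S)) := by
        refine Finset.sum_comm' ?_
        intro A S
        simp only [Finset.mem_powerset, Finset.mem_Icc]
        constructor
        · rintro ⟨_, h2, h3⟩; exact ⟨h2, h3⟩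
        · rintro ⟨h1, h2⟩; exact ⟨h1.trans h2, h1, h2⟩
    _ = ∑ S ∈ M.E.powerset, ∑ A ∈ S.powerset, ∑ B ∈ A.powerset,
          F B * ((-1) ^ S.card * ((-1) ^ A.card * G S)) := by
        exact Finset.sum_congr rfl fun S _ =>
          Finset.sum_congr rfl fun A _ => Finset.sum_mul _ _ _
    _ = ∑ S ∈ M.E.powerset, ∑ B ∈ S.powerset, ∑ A ∈ Finset.Icc B S,
          F B * ((-1) ^ S.card * ((-1) ^ A.card * G S)) := by
        refine Finset.sum_congr rfl fun S _ => Finset.sum_comm' ?_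
        intro A B
        simp only [Finset.mem_powerset, Finset.mem_Icc]
        constructor
        · rintro ⟨h1, h2⟩; exact ⟨⟨h2, h1⟩, h2.trans h1⟩
        · rintro ⟨⟨h1, h2⟩, _⟩; exact ⟨h2, h1⟩
    _ = ∑ S ∈ M.E.powerset, ∑ B ∈ S.powerset,
          (if B = S then F B * ((-1 : R) ^ S.card * ((-1) ^ S.card * G S)) else 0) := by
        refine Finset.sum_congr rfl fun S _ => Finset.sum_congr rfl fun B hB => ?_
        rw [Finset.mem_powerset] at hB
        rw [show (∑ A ∈ Finset.Icc B S, F B * ((-1 : R) ^ S.card * ((-1) ^ A.card * G S)))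
            = F B * ((-1 : R) ^ S.card) * G S * ∑ A ∈ Finset.Icc B S, (-1) ^ A.card from by
          rw [Finset.mul_sum]
          exact Finset.sum_congr rfl fun A _ => by ring]
        rw [sum_Icc_neg_one_pow hB]
        split
        · ring
        · rw [mul_zero]
    _ = ∑ S ∈ M.E.powerset, F S * ((-1 : R) ^ S.card * ((-1) ^ S.card * G S)) := by
        refine Finset.sum_congr rfl fun S hS => ?_
        rw [Finset.sum_ite_eq' S.powerset S
          (fun B => F B * ((-1 : R) ^ S.card * ((-1) ^ S.card * G S))),
          if_pos (Finset.mem_powerset.2 Finset.Subset.rfl)]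
    _ = ∑ S ∈ M.E.powerset, F S * G S := by
        refine Finset.sum_congr rfl fun S _ => ?_
        have hsgn : ((-1 : R)) ^ S.card * (-1) ^ S.card = 1 := by
          rw [← pow_add]
          rw [show ((-1 : R)) ^ (S.card + S.card) = (-1) ^ 0 from
            neg_one_pow_congr (by omega), pow_zero]
        linear_combination (F S * G S) * hsgn
    _ = lasVergnas M M' x y z := by
        rw [lasVergnas]
        refine Finset.sum_congr rfl fun S hS => ?_
        simp only [hF, hG, rank, hE]
        have hsgn : ((-1 : R)) ^ (M.rk S) * (-1) ^ (M.rk S) = 1 := by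
          rw [← pow_add]
          rw [show ((-1 : R)) ^ (M.rk S + M.rk S) = (-1) ^ 0 from
            neg_one_pow_congr (by omega), pow_zero]
        linear_combination ((y - 1) ^ (S.card - M.rk S) *
          (x - 1) ^ (M'.rk M.E - M'.rk S) *
          z ^ ((M.rk M.E - M.rk S) - (M'.rk M.E - M'.rk S))) * hsgn

end PreMatroid
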